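/- arXiv:2603.08585 — 4 statements merged into one kernel-verified Lean document; each statement's English description precedes it below -/
import Mathlib

section
/- Let D = (V,E) be a finite reflexive digraph admitting a nest ordering, with the intervals I_x = [a_x, b_x] and J_x = [α_x, β_x] defined by the stop-function construction. Then J_x ⊆ I_x for every x ∈ V, i.e., a_x ≤ α_x and β_x ≤ b_x. -/
open scoped Classical

/-- The vertex set is identified with `{1, …, n} ⊆ ℤ` via the nest ordering. -/
def Vert (n : ℕ) (x : ℤ) : Prop := 1 ≤ x ∧ x ≤ (n : ℤ)

/-- The arc `uv` is symmetric: both `uv` and `vu` are arcs. -/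
def SymArc (E : ℤ → ℤ → Prop) (u v : ℤ) : Prop := E u v ∧ E v u

/-- The natural order of `{1, …, n}` is a nest ordering of the digraph `E`:
for all vertices `u ≤ v ≤ w ≤ z` (repetitions allowed),
properties (i), (ii), (iii) hold. -/
def NestOrdered (n : ℕ) (E : ℤ → ℤ → Prop) : Prop :=
  ∀ u v w z : ℤ, Vert n u → Vert n v → Vert n w → Vert n z →
    u ≤ v → v ≤ w → w ≤ z →
    ((E u w ∧ E u z → E u v ∨ (SymArc E v w ∧ SymArc E v z ∧ SymArc E w z)) ∧
     (E z u ∧ E z v → E z w ∨ (SymArc E w u ∧ SymArc E v u ∧ SymArc E w v)) ∧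
     (E u z ∧ E v w → E u w ∨ E v z) ∧
     (E z u ∧ E w v → E z v ∨ E w u) ∧
     (E u w ∧ E v z → E v w ∨ E u z) ∧
     (E z v ∧ E w u → E z u ∨ E w v))

/-- `σR x` is the least `z > x` that is not an out-neighbor of `x`
(the auxiliary isolated vertices `0` and `n+1` are not out-neighbors of anyone,
since all arcs of `E` join vertices of `{1, …, n}`). -/
def IsStopR (E : ℤ → ℤ → Prop) (σR : ℤ → ℤ) (x : ℤ) : Prop :=
  x < σR x ∧ ¬ E x (σR x) ∧ ∀ z : ℤ, x < z → ¬ E x z → σR x ≤ z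

/-- `σL x` is the greatest `z < x` that is not an out-neighbor of `x`. -/
def IsStopL (E : ℤ → ℤ → Prop) (σL : ℤ → ℤ) (x : ℤ) : Prop :=
  σL x < x ∧ ¬ E x (σL x) ∧ ∀ z : ℤ, z < x → ¬ E x z → z ≤ σL x

/-- `N⁺_R(x)`: the out-neighbors of `x` beyond `σR x`. -/
noncomputable def NRset (n : ℕ) (E : ℤ → ℤ → Prop) (σR : ℤ → ℤ) (x : ℤ) : Finset ℤ :=
  (Finset.Icc 1 (n : ℤ)).filter fun z => σR x < z ∧ E x z

/-- `N⁺_L(x)`: the out-neighbors of `x` before `σL x`. -/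
noncomputable def NLset (n : ℕ) (E : ℤ → ℤ → Prop) (σL : ℤ → ℤ) (x : ℤ) : Finset ℤ :=
  (Finset.Icc 1 (n : ℤ)).filter fun z => z < σL x ∧ E x z

/-- Left endpoint `a_x = σL x + 1/(2 + |N⁺_L(x)|)` of the interval `I_x`. -/
noncomputable def aEnd (n : ℕ) (E : ℤ → ℤ → Prop) (σL : ℤ → ℤ) (x : ℤ) : ℝ :=
  (σL x : ℝ) + 1 / (2 + ((NLset n E σL x).card : ℝ))

/-- Right endpoint `b_x = σR x − 1/(2 + |N⁺_R(x)|)` of the interval `I_x`. -/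
noncomputable def bEnd (n : ℕ) (E : ℤ → ℤ → Prop) (σR : ℤ → ℤ) (x : ℤ) : ℝ :=
  (σR x : ℝ) - 1 / (2 + ((NRset n E σR x).card : ℝ))

/-- Left endpoint `α_x = min({b_z : z < x, zx ∈ E} ∪ {x})` of the interval `J_x`. -/
noncomputable def alphaEnd (n : ℕ) (E : ℤ → ℤ → Prop) (σR : ℤ → ℤ) (x : ℤ) : ℝ :=
  (insert (x : ℝ)
      ((((Finset.Icc 1 (n : ℤ)).filter fun z => z < x ∧ E z x)).image (bEnd n E σR))).min'
    (Finset.insert_nonempty _ _)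

/-- Right endpoint `β_x = max({a_z : z > x, zx ∈ E} ∪ {x})` of the interval `J_x`. -/
noncomputable def betaEnd (n : ℕ) (E : ℤ → ℤ → Prop) (σL : ℤ → ℤ) (x : ℤ) : ℝ :=
  (insert (x : ℝ)
      ((((Finset.Icc 1 (n : ℤ)).filter fun z => x < z ∧ E z x)).image (aEnd n E σL))).max'
    (Finset.insert_nonempty _ _)

/-! An in- or out-neighbour `v > u` of `u` lies strictly between the stops: if `σR u ≤ σL v`,
the nest axioms (i) resp. (ii) applied to `u ≤ σR u ≤ σL v ≤ v` force `u` to see its own stop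
`σR u` or `v` to see its own stop `σL v`. The offsets `1/(2 + |N⁺|)` are at most `1/2`, so
`σL v < σR u` in `ℤ` turns into `a_v ≤ b_u`; with `σL x < x < σR x` this is all `J_x ⊆ I_x` needs. -/

section Stops

variable {n : ℕ} {E : ℤ → ℤ → Prop} {σR σL : ℤ → ℤ} {u v : ℤ}

theorem NestOrdered.stopL_lt_stopR_of_arc (hnest : NestOrdered n E) (hu : Vert n u)
    (hv : Vert n v) (hσR : IsStopR E σR u) (hσL : IsStopL E σL v) (hE : E u v) :
    σL v < σR u := by
  by_contra! h
  obtain ⟨hu_lt, hu_stop, -⟩ := hσR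
  obtain ⟨hv_lt, hv_stop, -⟩ := hσL
  have hR : Vert n (σR u) := ⟨by linarith [hu.1], by linarith [hv.2]⟩
  have hL : Vert n (σL v) := ⟨by linarith [hu.1], by linarith [hv.2]⟩
  have hE_stop : E u (σL v) :=
    ((hnest u (σL v) v v hu hL hv hv (by omega) hv_lt.le le_rfl).1 ⟨hE, hE⟩).resolve_right
      fun hs => hv_stop hs.1.2
  exact ((hnest u (σR u) (σL v) v hu hR hL hv hu_lt.le h hv_lt.le).1 ⟨hE_stop, hE⟩).elim
    hu_stop fun hs => hv_stop hs.2.2.2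

theorem NestOrdered.stopL_lt_stopR_of_arc_back (hnest : NestOrdered n E) (hu : Vert n u)
    (hv : Vert n v) (hσR : IsStopR E σR u) (hσL : IsStopL E σL v) (hE : E v u) :
    σL v < σR u := by
  by_contra! h
  obtain ⟨hu_lt, hu_stop, -⟩ := hσR
  obtain ⟨hv_lt, hv_stop, -⟩ := hσL
  have hR : Vert n (σR u) := ⟨by linarith [hu.1], by linarith [hv.2]⟩
  have hL : Vert n (σL v) := ⟨by linarith [hu.1], by linarith [hv.2]⟩
  have hE_stop : E v (σR u) :=
    ((hnest u u (σR u) v hu hu hR hv le_rfl hu_lt.le (by omega)).2.1 ⟨hE, hE⟩).resolve_right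
      fun hs => hu_stop hs.1.2
  exact ((hnest u (σR u) (σL v) v hu hR hL hv hu_lt.le h hv_lt.le).2.1 ⟨hE, hE_stop⟩).elim
    hv_stop fun hs => hu_stop hs.2.1.2

end Stops

section Endpoints

variable {n : ℕ} {E : ℤ → ℤ → Prop} {σR σL : ℤ → ℤ} {x : ℤ}

theorem one_div_two_add_natCast_le_half (c : ℕ) : 1 / (2 + (c : ℝ)) ≤ 1 / 2 :=
  one_div_le_one_div_of_le two_pos (le_add_of_nonneg_right c.cast_nonneg)

theorem aEnd_le_add_half : aEnd n E σL x ≤ σL x + 1 / 2 :=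
  add_le_add_right (one_div_two_add_natCast_le_half _) _

theorem sub_half_le_bEnd : (σR x : ℝ) - 1 / 2 ≤ bEnd n E σR x :=
  sub_le_sub_left (one_div_two_add_natCast_le_half _) _

theorem aEnd_le_of_lt {t : ℤ} (h : σL x < t) : aEnd n E σL x ≤ t := by
  have h' : (σL x : ℝ) + 1 ≤ t := by exact_mod_cast h
  linarith [aEnd_le_add_half (n := n) (E := E) (σL := σL) (x := x)]

theorem le_bEnd_of_lt {s : ℤ} (h : s < σR x) : s ≤ bEnd n E σR x := by
  have h' : (s : ℝ) + 1 ≤ σR x := by exact_mod_cast h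
  linarith [sub_half_le_bEnd (n := n) (E := E) (σR := σR) (x := x)]

theorem aEnd_le_bEnd_of_lt {y : ℤ} (h : σL x < σR y) : aEnd n E σL x ≤ bEnd n E σR y := by
  have h' : (σL x : ℝ) + 1 ≤ σR y := by exact_mod_cast h
  linarith [aEnd_le_add_half (n := n) (E := E) (σL := σL) (x := x),
    sub_half_le_bEnd (n := n) (E := E) (σR := σR) (x := y)]

theorem le_alphaEnd {r : ℝ} (hx : r ≤ x)
    (hin : ∀ z, Vert n z → z < x → E z x → r ≤ bEnd n E σR z) : r ≤ alphaEnd n E σR x := by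
  refine Finset.le_min' _ _ _ fun y hy => ?_
  simp only [Finset.mem_insert, Finset.mem_image, Finset.mem_filter, Finset.mem_Icc] at hy
  rcases hy with rfl | ⟨z, ⟨hz, hzx, hE⟩, rfl⟩
  exacts [hx, hin z hz hzx hE]

theorem betaEnd_le {r : ℝ} (hx : x ≤ r)
    (hin : ∀ z, Vert n z → x < z → E z x → aEnd n E σL z ≤ r) : betaEnd n E σL x ≤ r := by
  refine Finset.max'_le _ _ _ fun y hy => ?_
  simp only [Finset.mem_insert, Finset.mem_image, Finset.mem_filter, Finset.mem_Icc] at hy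
  rcases hy with rfl | ⟨z, ⟨hz, hxz, hE⟩, rfl⟩
  exacts [hx, hin z hz hxz hE]

end Endpoints

theorem stop_construction_contention_general
    (n : ℕ) (E : ℤ → ℤ → Prop)
    (hnest : NestOrdered n E)
    (σR σL : ℤ → ℤ)
    (hσR : ∀ x, Vert n x → IsStopR E σR x)
    (hσL : ∀ x, Vert n x → IsStopL E σL x) :
    ∀ x, Vert n x →
      aEnd n E σL x ≤ alphaEnd n E σR x ∧
      betaEnd n E σL x ≤ bEnd n E σR x := by
  intro x hx
  constructor
  · refine le_alphaEnd ?_ fun z hz _ hE => ?_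
    · exact aEnd_le_of_lt (hσL x hx).1
    · exact aEnd_le_bEnd_of_lt (hnest.stopL_lt_stopR_of_arc hz hx (hσR z hz) (hσL x hx) hE)
  · refine betaEnd_le ?_ fun z hz _ hE => ?_
    · exact le_bEnd_of_lt (hσR x hx).1
    · exact aEnd_le_bEnd_of_lt (hnest.stopL_lt_stopR_of_arc_back hx hz (hσR x hx) (hσL z hz) hE)

/-- For a finite reflexive digraph with a nest ordering, the intervals of the
stop-function construction satisfy `J_x ⊆ I_x`, i.e. `a_x ≤ α_x` and `β_x ≤ b_x`. -/
theorem stop_construction_contention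
    (n : ℕ) (E : ℤ → ℤ → Prop)
    (hdom : ∀ x y, E x y → Vert n x ∧ Vert n y)
    (hrefl : ∀ x, Vert n x → E x x)
    (hnest : NestOrdered n E)
    (σR σL : ℤ → ℤ)
    (hσR : ∀ x, Vert n x → IsStopR E σR x)
    (hσL : ∀ x, Vert n x → IsStopL E σL x) :
    ∀ x, Vert n x →
      aEnd n E σL x ≤ alphaEnd n E σR x ∧
      betaEnd n E σL x ≤ bEnd n E σR x :=
  stop_construction_contention_general n E hnest σR σL hσR hσL
end

section
/- Let D = (V,E) be a finite reflexive digraph admitting a nest ordering, with the stop functions σ_R, σ_L and the sets N^+_R, N^+_L from the stop-function construction. For any two vertices x, y ∈ V, if σ_R(x) = σ_R(y), then N^+_R(x) ⊆ N^+_R(y) or N^+_R(y) ⊆ N^+_R(x). -/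
open scoped Classical

/-! Let `x ≤ y` share the stop `s = σR x = σR y`, so every `z ∈ N⁺_R(x) ∪ N⁺_R(y)` lies beyond `y`.
A crossing pair `p ∈ N⁺_R(x) \ N⁺_R(y)`, `q ∈ N⁺_R(y) \ N⁺_R(x)` violates property (iii) of the
nest ordering if `p ≤ q`, and property (ii) if `q ≤ p`. -/

theorem NestOrdered.exchange {n : ℕ} {E : ℤ → ℤ → Prop} (hnest : NestOrdered n E)
    {x y p q : ℤ} (hx : Vert n x) (hy : Vert n y) (hp : Vert n p) (hq : Vert n q)
    (hxy : x ≤ y) (hyp : y ≤ p) (hyq : y ≤ q) (hxp : E x p) (hEyq : E y q) :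
    E x q ∨ E y p := by
  rcases le_total p q with hpq | hqp
  · exact ((hnest x y p q hx hy hp hq hxy hyp hpq).2.2.2.2.1 ⟨hxp, hEyq⟩).symm
  · exact (hnest x y q p hx hy hq hp hxy hyq hqp).2.2.1 ⟨hxp, hEyq⟩

theorem NestOrdered.nRset_subset_or_subset_of_le {n : ℕ} {E : ℤ → ℤ → Prop}
    (hnest : NestOrdered n E) {σR : ℤ → ℤ} {x y : ℤ} (hx : Vert n x) (hy : Vert n y)
    (hxy : x ≤ y) (hyσ : y < σR y) (hs : σR x = σR y) :
    NRset n E σR x ⊆ NRset n E σR y ∨ NRset n E σR y ⊆ NRset n E σR x := by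
  simp only [NRset, hs]
  rw [or_iff_not_imp_left, Finset.not_subset]
  rintro ⟨p, hpx, hpy⟩ q hqy
  simp only [Finset.mem_filter] at hpx hpy hqy ⊢
  obtain ⟨hpV, hσp, hxp⟩ := hpx
  obtain ⟨hqV, hσq, hyq⟩ := hqy
  refine ⟨hqV, hσq, ?_⟩
  exact (hnest.exchange hx hy (Finset.mem_Icc.mp hpV) (Finset.mem_Icc.mp hqV) hxy
    (hyσ.trans hσp).le (hyσ.trans hσq).le hxp hyq).resolve_right fun hyp => hpy ⟨hpV, hσp, hyp⟩

theorem stop_construction_nested_right_neighborhoods_general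
    (n : ℕ) (E : ℤ → ℤ → Prop)
    (hnest : NestOrdered n E)
    (σR : ℤ → ℤ)
    (hσR : ∀ x, Vert n x → IsStopR E σR x) :
    ∀ x y, Vert n x → Vert n y → σR x = σR y →
      NRset n E σR x ⊆ NRset n E σR y ∨ NRset n E σR y ⊆ NRset n E σR x := by
  intro x y hx hy hs
  rcases le_total x y with hxy | hyx
  · exact hnest.nRset_subset_or_subset_of_le hx hy hxy (hσR y hy).1 hs
  · exact (hnest.nRset_subset_or_subset_of_le hy hx hyx (hσR x hx).1 hs.symm).symm

/-- For a finite reflexive digraph with a nest ordering: if `σR x = σR y`,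
then `N⁺_R(x) ⊆ N⁺_R(y)` or `N⁺_R(y) ⊆ N⁺_R(x)`. -/
theorem stop_construction_nested_right_neighborhoods
    (n : ℕ) (E : ℤ → ℤ → Prop)
    (hdom : ∀ x y, E x y → Vert n x ∧ Vert n y)
    (hrefl : ∀ x, Vert n x → E x x)
    (hnest : NestOrdered n E)
    (σR σL : ℤ → ℤ)
    (hσR : ∀ x, Vert n x → IsStopR E σR x)
    (hσL : ∀ x, Vert n x → IsStopL E σL x) :
    ∀ x y, Vert n x → Vert n y → σR x = σR y →
      NRset n E σR x ⊆ NRset n E σR y ∨ NRset n E σR y ⊆ NRset n E σR x :=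
  stop_construction_nested_right_neighborhoods_general n E hnest σR hσR
end

section
/- Let D = (V,E) be a finite reflexive digraph admitting a nest ordering, with the stop functions σ_R, σ_L and the sets N^+_R, N^+_L from the stop-function construction. For any two vertices x, y ∈ V, if σ_L(x) = σ_L(y), then N^+_L(x) ⊆ N^+_L(y) or N^+_L(y) ⊆ N^+_L(x). -/
/-!
Elements `a ∈ N⁺_L(x) \ N⁺_L(y)` and `b ∈ N⁺_L(y) \ N⁺_L(x)` would lie below the common stop
`σ_L(x) = σ_L(y)`, hence below both `x` and `y`; the arcs `xa`, `yb` together with the non-arcs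
`xb`, `ya` then violate the in-arc form of condition (ii) or (iii), depending on how `a, b`
and `x, y` are ordered.
-/

open scoped Classical

namespace NestOrdered

variable {n : ℕ} {E : ℤ → ℤ → Prop}

theorem exchange_in_arcs_of_le (hnest : NestOrdered n E) {a b x y : ℤ}
    (ha : Vert n a) (hb : Vert n b) (hx : Vert n x) (hy : Vert n y)
    (hax : a ≤ x) (hbx : b ≤ x) (hxy : x ≤ y) (hxa : E x a) (hyb : E y b) :
    E x b ∨ E y a := by
  rcases le_total a b with hab | hba
  · exact ((hnest a b x y ha hb hx hy hab hbx hxy).2.2.2.2.2 ⟨hyb, hxa⟩).symm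
  · exact ((hnest b a x y hb ha hx hy hba hax hxy).2.2.2.1 ⟨hyb, hxa⟩).symm

theorem exchange_in_arcs (hnest : NestOrdered n E) {a b x y : ℤ}
    (ha : Vert n a) (hb : Vert n b) (hx : Vert n x) (hy : Vert n y)
    (hax : a ≤ x) (hay : a ≤ y) (hbx : b ≤ x) (hby : b ≤ y) (hxa : E x a) (hyb : E y b) :
    E x b ∨ E y a := by
  rcases le_total x y with hxy | hyx
  · exact hnest.exchange_in_arcs_of_le ha hb hx hy hax hbx hxy hxa hyb
  · exact (hnest.exchange_in_arcs_of_le hb ha hy hx hby hay hyx hyb hxa).symm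

end NestOrdered

theorem mem_NLset {n : ℕ} {E : ℤ → ℤ → Prop} {σL : ℤ → ℤ} {x z : ℤ} :
    z ∈ NLset n E σL x ↔ Vert n z ∧ z < σL x ∧ E x z := by
  simp only [NLset, Finset.mem_filter, Finset.mem_Icc, Vert]

theorem stop_construction_nested_left_neighborhoods_general
    (n : ℕ) (E : ℤ → ℤ → Prop)
    (hnest : NestOrdered n E)
    (σL : ℤ → ℤ)
    (hσL : ∀ x, Vert n x → IsStopL E σL x) :
    ∀ x y, Vert n x → Vert n y → σL x = σL y →
      NLset n E σL x ⊆ NLset n E σL y ∨ NLset n E σL y ⊆ NLset n E σL x := by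
  intro x y hx hy hσ
  by_contra! hcon
  obtain ⟨a, hax, hay⟩ := Finset.not_subset.1 hcon.1
  obtain ⟨b, hby, hbx⟩ := Finset.not_subset.1 hcon.2
  rw [mem_NLset] at hax hay hby hbx
  obtain ⟨ha, haσ, hxa⟩ := hax
  obtain ⟨hb, hbσ, hyb⟩ := hby
  have hσx := (hσL x hx).1
  have hσy := (hσL y hy).1
  rcases hnest.exchange_in_arcs ha hb hx hy (by omega) (by omega) (by omega) (by omega) hxa hyb
    with hxb | hya
  · exact hbx ⟨hb, hσ ▸ hbσ, hxb⟩
  · exact hay ⟨ha, hσ ▸ haσ, hya⟩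

/-- For a finite reflexive digraph with a nest ordering: if `σL x = σL y`,
then `N⁺_L(x) ⊆ N⁺_L(y)` or `N⁺_L(y) ⊆ N⁺_L(x)`. -/
theorem stop_construction_nested_left_neighborhoods
    (n : ℕ) (E : ℤ → ℤ → Prop)
    (hdom : ∀ x y, E x y → Vert n x ∧ Vert n y)
    (hrefl : ∀ x, Vert n x → E x x)
    (hnest : NestOrdered n E)
    (σR σL : ℤ → ℤ)
    (hσR : ∀ x, Vert n x → IsStopR E σR x)
    (hσL : ∀ x, Vert n x → IsStopL E σL x) :
    ∀ x y, Vert n x → Vert n y → σL x = σL y →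
      NLset n E σL x ⊆ NLset n E σL y ∨ NLset n E σL y ⊆ NLset n E σL x :=
  stop_construction_nested_left_neighborhoods_general n E hnest σL hσL
end

section
/- Let D = (V,E) be a finite reflexive digraph admitting a nest ordering, with the stop functions σ_R, σ_L from the stop-function construction. If x < y are vertices of V with yx ∈ E, then σ_L(y) < σ_R(x). -/
/-!
If `σR x ≤ σL y`, the reversed half of property (i), applied first to `x ≤ x ≤ σR x ≤ y` and then
to `x ≤ σR x ≤ σL y ≤ y`, forces `x → σR x` to be an arc, which it is not by construction.
-/

open scoped Classical

theorem NestOrdered.arcs_of_not_arc {n : ℕ} {E : ℤ → ℤ → Prop} (hnest : NestOrdered n E)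
    {u v w z : ℤ} (hu : Vert n u) (hv : Vert n v) (hw : Vert n w) (hz : Vert n z)
    (huv : u ≤ v) (hvw : v ≤ w) (hwz : w ≤ z) (hzu : E z u) (hzv : E z v) (hzw : ¬ E z w) :
    E u v ∧ E u w := by
  rcases (hnest u v w z hu hv hw hz huv hvw hwz).2.1 ⟨hzu, hzv⟩ with h | ⟨⟨_, huw⟩, ⟨_, huv⟩, _⟩
  · exact absurd h hzw
  · exact ⟨huv, huw⟩

theorem stop_construction_sigmaL_lt_sigmaR_general
    (n : ℕ) (E : ℤ → ℤ → Prop)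
    (hnest : NestOrdered n E)
    (σR σL : ℤ → ℤ)
    (hσR : ∀ x, Vert n x → IsStopR E σR x)
    (hσL : ∀ x, Vert n x → IsStopL E σL x) :
    ∀ x y, Vert n x → Vert n y → x < y → E y x → σL y < σR x := by
  intro x y hx hy hxy hyx
  by_contra! hst
  obtain ⟨hxs, hnxs, -⟩ := hσR x hx
  obtain ⟨hty, hnyt, -⟩ := hσL y hy
  have hs : Vert n (σR x) := ⟨by linarith [hx.1], by linarith [hy.2]⟩
  have ht : Vert n (σL y) := ⟨by linarith [hx.1], by linarith [hy.2]⟩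
  have hys : E y (σR x) := by
    by_contra hnys
    exact hnxs (hnest.arcs_of_not_arc hx hx hs hy le_rfl hxs.le (by linarith) hyx hyx hnys).2
  exact hnxs (hnest.arcs_of_not_arc hx hs ht hy hxs.le hst hty.le hyx hys hnyt).1

/-- For a finite reflexive digraph with a nest ordering: if `x < y` are vertices
with `yx ∈ E`, then `σL y < σR x`. -/
theorem stop_construction_sigmaL_lt_sigmaR
    (n : ℕ) (E : ℤ → ℤ → Prop)
    (hdom : ∀ x y, E x y → Vert n x ∧ Vert n y)
    (hrefl : ∀ x, Vert n x → E x x)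
    (hnest : NestOrdered n E)
    (σR σL : ℤ → ℤ)
    (hσR : ∀ x, Vert n x → IsStopR E σR x)
    (hσL : ∀ x, Vert n x → IsStopL E σL x) :
    ∀ x y, Vert n x → Vert n y → x < y → E y x → σL y < σR x :=
  stop_construction_sigmaL_lt_sigmaR_general n E hnest σR σL hσR hσL
end
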